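/- If for every real σ with 1/2 < σ < 1 and every real t one has ∫_{-∞}^∞ e^{itx} V_σ(x) dx ≠ 0, then ζ(s) ≠ 0 for every complex s with 1/2 < Re(s) < 1 (so that, combined with the functional equation, the Riemann hypothesis holds). -/

import Mathlib

/-!
Substituting `u = eˣ` turns `∫ e^{itx} V_σ(x) dx` into the Mellin transform at `s = σ + it` of the
Fermi–Dirac function `u ↦ 1/(1 + eᵘ)`. Expanding that function as the geometric series
`Σ (-1)ⁿ e^{-(n+1)u}` and integrating term by term gives `Γ(s) η(s)` for `Re s > 1`, where
`η(s) = (1 - 2^{1-s}) ζ(s)` is the Dirichlet eta function. Both sides are holomorphic on the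
half-plane `Re s > 0` punctured at `1`, which is connected, so the identity persists there; a zero
of `ζ` in the strip is therefore a zero of the integral.
-/

open Complex MeasureTheory

noncomputable def fermiDirac (u : ℝ) : ℂ := ((1 + Real.exp u)⁻¹ : ℝ)

noncomputable def dirichletEta (s : ℂ) : ℂ := (1 - 2 ^ (1 - s)) * riemannZeta s

lemma hasSum_one_div_nat_add_one_cpow {s : ℂ} (hs : 1 < s.re) :
    HasSum (fun n : ℕ => 1 / ((n : ℂ) + 1) ^ s) (riemannZeta s) := by
  have hsum : Summable (fun n : ℕ => 1 / ((n : ℂ) + 1) ^ s) := by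
    simpa using (summable_nat_add_iff 1).mpr (summable_one_div_nat_cpow.mpr hs)
  exact hsum.hasSum_iff.mpr (zeta_eq_tsum_one_div_nat_add_one_cpow hs).symm

lemma hasSum_dirichletEta {s : ℂ} (hs : 1 < s.re) :
    HasSum (fun n : ℕ => (-1) ^ n / ((n : ℂ) + 1) ^ s) (dirichletEta s) := by
  set f : ℕ → ℂ := fun n => 1 / ((n : ℂ) + 1) ^ s
  have hf : HasSum f (riemannZeta s) := hasSum_one_div_nat_add_one_cpow hs
  have hodd : HasSum (fun k => f (2 * k + 1)) (2 ^ (-s) * riemannZeta s) := by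
    refine (hf.mul_left (2 ^ (-s))).congr_fun fun k => ?_
    have h2 : ((2 * k + 1 : ℕ) : ℂ) + 1 = ((2 : ℕ) : ℂ) * ((k + 1 : ℕ) : ℂ) := by push_cast; ring
    simp only [f]
    rw [h2, natCast_mul_natCast_cpow, cpow_neg]
    push_cast
    field_simp
  obtain ⟨E, heven⟩ : Summable (fun k => f (2 * k)) :=
    hf.summable.comp_injective (mul_right_injective₀ two_ne_zero)
  have hE : E = riemannZeta s - 2 ^ (-s) * riemannZeta s :=
    eq_sub_of_add_eq ((heven.even_add_odd hodd).unique hf)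
  have htwo : (2 : ℂ) ^ (1 - s) = 2 * 2 ^ (-s) := by
    rw [sub_eq_add_neg, cpow_add _ _ two_ne_zero, cpow_one]
  convert (heven.congr_fun fun k => ?_).even_add_odd (hodd.neg.congr_fun fun k => ?_) using 1
  · rw [dirichletEta, hE, htwo]
    ring
  · simp [f, pow_mul, div_eq_mul_inv]
  · simp [f, pow_succ, pow_mul, div_eq_mul_inv]

lemma differentiableAt_dirichletEta {s : ℂ} (hs : s ≠ 1) : DifferentiableAt ℂ dirichletEta s :=
  (((differentiableAt_const _).sub differentiableAt_id).const_cpow (Or.inl two_ne_zero)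
    |>.const_sub _).mul (differentiableAt_riemannZeta hs)

lemma hasSum_fermiDirac {u : ℝ} (hu : 0 < u) :
    HasSum (fun n : ℕ => (-1) ^ n * (Real.exp (-(n + 1 : ℝ) * u) : ℂ)) (fermiDirac u) := by
  have hr : ‖-Real.exp (-u)‖ < 1 := by simpa using hu
  have hgeom := (hasSum_geometric_of_norm_lt_one hr).mul_left (Real.exp (-u))
  have hval : Real.exp (-u) * (1 - -Real.exp (-u))⁻¹ = (1 + Real.exp u)⁻¹ := by
    have h : Real.exp u + 1 ≠ 0 := by positivity
    rw [sub_neg_eq_add, Real.exp_neg, add_comm 1 (Real.exp u)]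
    field_simp
  rw [hval] at hgeom
  refine (hasSum_ofReal.mpr hgeom).congr_fun fun n => ?_
  rw [show -(n + 1 : ℝ) * u = -u + n * -u by ring, Real.exp_add, Real.exp_nat_mul]
  push_cast
  ring

lemma norm_fermiDirac_le (u : ℝ) : ‖fermiDirac u‖ ≤ min 1 (Real.exp (-u)) := by
  have h : 0 < 1 + Real.exp u := by positivity
  rw [fermiDirac, norm_real, Real.norm_of_nonneg (inv_nonneg.mpr h.le), Real.exp_neg]
  exact le_min (inv_le_one_of_one_le₀ (by linarith [Real.exp_pos u]))
    (inv_anti₀ (Real.exp_pos u) (by linarith))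

lemma continuous_fermiDirac : Continuous fermiDirac := by
  unfold fermiDirac
  fun_prop (disch := intro; positivity)

lemma mellin_fermiDirac_of_one_lt_re {s : ℂ} (hs : 1 < s.re) :
    mellin fermiDirac s = Gamma s * dirichletEta s := by
  have hmellin := hasSum_mellin (a := fun n : ℕ => (-1) ^ n) (p := fun n => n + 1)
    (fun n => Or.inr n.cast_add_one_pos) (by linarith) (fun u hu => hasSum_fermiDirac hu) ?_
  · refine hmellin.unique ?_
    simpa [mul_div_assoc] using (hasSum_dirichletEta hs).mul_left (Gamma s)
  · simpa using (summable_nat_add_iff 1).mpr (Real.summable_one_div_nat_rpow.mpr hs)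

lemma differentiableAt_mellin_fermiDirac {s : ℂ} (hs : 0 < s.re) :
    DifferentiableAt ℂ (mellin fermiDirac) s := by
  refine mellin_differentiableAt_of_isBigO_rpow_exp one_pos
    (continuous_fermiDirac.continuousOn.locallyIntegrableOn measurableSet_Ioi) ?_ (b := 0) ?_ hs
  · refine Asymptotics.IsBigO.of_bound 1 (Filter.Eventually.of_forall fun u => ?_)
    simpa using (norm_fermiDirac_le u).trans (min_le_right _ _)
  · refine Asymptotics.IsBigO.of_bound 1 (Filter.Eventually.of_forall fun u => ?_)
    simpa using (norm_fermiDirac_le u).trans (min_le_left _ _)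

lemma isPreconnected_re_gt_diff_singleton {c : ℝ} {a : ℂ} (ha : c < a.re) :
    IsPreconnected ({s : ℂ | c < s.re} \ {a}) := by
  have hL : IsPreconnected {s : ℂ | c < s.re ∧ s.re < a.re} :=
    ((convex_halfSpace_re_gt c).inter (convex_halfSpace_re_lt a.re)).isPreconnected
  have hT : IsPreconnected {s : ℂ | c < s.re ∧ a.im < s.im} :=
    ((convex_halfSpace_re_gt c).inter (convex_halfSpace_im_gt a.im)).isPreconnected
  have hR : IsPreconnected {s : ℂ | a.re < s.re} := (convex_halfSpace_re_gt a.re).isPreconnected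
  have hB : IsPreconnected {s : ℂ | c < s.re ∧ s.im < a.im} :=
    ((convex_halfSpace_re_gt c).inter (convex_halfSpace_im_lt a.im)).isPreconnected
  have hLT := hL.union (⟨(c + a.re) / 2, a.im + 1⟩ : ℂ)
    (by constructor <;> simp <;> linarith) (by constructor <;> simp; linarith) hT
  have hLTR := hLT.union (⟨a.re + 1, a.im + 1⟩ : ℂ)
    (Or.inr (by simpa using ha.trans (lt_add_one _))) (by simp) hR
  have hLTRB := hLTR.union (⟨a.re + 1, a.im - 1⟩ : ℂ)
    (Or.inr (by simp)) (by simpa using ha.trans (lt_add_one _)) hB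
  convert hLTRB using 1
  ext s
  simp only [Set.mem_sdiff, Set.mem_ofPred_eq, Set.mem_singleton_iff, Set.mem_union,
    Complex.ext_iff]
  grind

lemma mellin_fermiDirac {s : ℂ} (hs : 0 < s.re) (hs1 : s ≠ 1) :
    mellin fermiDirac s = Gamma s * dirichletEta s := by
  set U : Set ℂ := {z : ℂ | 0 < z.re} \ {1}
  have hU : IsOpen U := (isOpen_lt continuous_const continuous_re).sdiff isClosed_singleton
  have hlhs : AnalyticOnNhd ℂ (mellin fermiDirac) U :=
    DifferentiableOn.analyticOnNhd
      (fun z hz => (differentiableAt_mellin_fermiDirac hz.1).differentiableWithinAt) hU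
  have hrhs : AnalyticOnNhd ℂ (fun z => Gamma z * dirichletEta z) U := by
    refine DifferentiableOn.analyticOnNhd (fun z hz => ?_) hU
    have hz0 : 0 < z.re := hz.1
    have hGamma : ∀ m : ℕ, z ≠ -m := fun m hm => by
      have : z.re = -m := by simp [hm]
      linarith [(m.cast_nonneg : (0 : ℝ) ≤ m)]
    exact ((differentiableAt_Gamma z hGamma).mul
      (differentiableAt_dirichletEta hz.2)).differentiableWithinAt
  have heq : mellin fermiDirac =ᶠ[nhds 2] fun z => Gamma z * dirichletEta z :=
    Filter.eventually_of_mem ((isOpen_lt continuous_const continuous_re).mem_nhds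
      (by norm_num : (1 : ℝ) < (2 : ℂ).re)) fun z hz => mellin_fermiDirac_of_one_lt_re hz
  exact hlhs.eqOn_of_preconnected_of_eventuallyEq hrhs
    (isPreconnected_re_gt_diff_singleton (by norm_num)) ⟨by simp, by norm_num⟩ heq ⟨hs, hs1⟩

lemma mellin_eq_integral_cexp_mul {E : Type*} [NormedAddCommGroup E] [NormedSpace ℂ E]
    (f : ℝ → E) (s : ℂ) :
    mellin f s = ∫ x : ℝ, cexp (s * x) • f (Real.exp x) := by
  rw [mellin, ← Real.range_exp, ← Set.image_univ, integral_image_eq_integral_abs_deriv_smul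
    MeasurableSet.univ (fun x _ => (Real.hasDerivAt_exp x).hasDerivWithinAt)
    Real.exp_injective.injOn, Measure.restrict_univ]
  refine integral_congr_ae (Filter.Eventually.of_forall fun x => ?_)
  have hlog : log (cexp x) = x := log_exp (by simp [Real.pi_pos]) (by simp [Real.pi_pos.le])
  dsimp only
  rw [abs_of_pos (Real.exp_pos x), ← smul_assoc, ofReal_exp,
    cpow_def_of_ne_zero (exp_ne_zero _), hlog, real_smul, ofReal_exp, ← Complex.exp_add]
  ring_nf

lemma integral_cexp_mul_V_eq_mellin_fermiDirac (σ t : ℝ) :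
    ∫ x : ℝ, cexp (I * t * x) * ((Real.exp (σ * x) / (1 + Real.exp (Real.exp x)) : ℝ) : ℂ)
      = mellin fermiDirac (σ + t * I) := by
  rw [mellin_eq_integral_cexp_mul]
  congr 1 with x
  rw [fermiDirac, smul_eq_mul, div_eq_mul_inv, ofReal_mul, ofReal_exp, ← mul_assoc,
    ← Complex.exp_add]
  push_cast
  ring_nf

/-- If the Fourier transform of `V_σ` never vanishes for `1/2 < σ < 1`, then
`ζ` has no zeros in the strip `1/2 < Re s < 1`. -/
theorem no_zeta_zero_of_fourier_V_ne_zero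
    (h : ∀ σ t : ℝ, 1 / 2 < σ → σ < 1 →
      ∫ x : ℝ, Complex.exp (Complex.I * t * x)
          * ((Real.exp (σ * x) / (1 + Real.exp (Real.exp x)) : ℝ) : ℂ) ≠ 0) :
    ∀ s : ℂ, 1 / 2 < s.re → s.re < 1 → riemannZeta s ≠ 0 := by
  intro s hs_lo hs_hi hzero
  have hs1 : s ≠ 1 := fun hs => by simp [hs] at hs_hi
  apply h s.re s.im hs_lo hs_hi
  rw [integral_cexp_mul_V_eq_mellin_fermiDirac, re_add_im, mellin_fermiDirac (by linarith) hs1,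
    dirichletEta, hzero, mul_zero, mul_zero]
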